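/- arXiv:2509.16689 — 4 statements merged into one kernel-verified Lean document; each statement's English description precedes it below -/
import Mathlib

section
/- The standard teleportation channel is invariant under Bell-diagonal twirling of the resource state: for any qubit state σ and two-qubit resource state ρ, Λ^tel_ρ(σ) = Λ^tel_{B(ρ)}(σ), where Λ^tel_ρ(σ) := ∑_{i,j∈{0,1}} (Z^j X^i) ⟨Ψ_ij|_{CA} (σ_C ⊗ ρ_{AB}) |Ψ_ij⟩_{CA} (Z^j X^i)†. -/
/-!
The twirl averages the resource over the conjugations by `P ⊗ P`, `P ∈ {I, X, Y, Z}`, so by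
linearity it suffices that each conjugation leaves the channel unchanged. Conjugating the resource
by `U ⊗ V` moves `U` onto the Bell vector and pulls `V` out of the partial inner product. For
`U = V = X` the Bell outcome `(i, j)` becomes `(i + 1, j)` and the extra `X` is absorbed by the
Pauli correction; for `Z` the outcome becomes `(i, j + 1)` up to a sign `(-1)^i` that cancels.
Summing over all outcomes hides the relabelling, and `Y ⊗ Y` is, up to a phase, the product of
the two.
-/

open Matrix Kronecker BigOperators ComplexOrder

noncomputable section

def PX : Matrix (Fin 2) (Fin 2) ℂ := !![0, 1; 1, 0]

def PY : Matrix (Fin 2) (Fin 2) ℂ := !![0, -Complex.I; Complex.I, 0]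

def PZ : Matrix (Fin 2) (Fin 2) ℂ := !![1, 0; 0, -1]

def bell00 : Fin 2 × Fin 2 → ℂ := fun p => if p.1 = p.2 then ((1 / Real.sqrt 2 : ℝ) : ℂ) else 0

/-- The Bell basis vector |Ψ_ij⟩ = (I ⊗ X^i Z^j)|Ψ₀₀⟩. -/
def bell (i j : Fin 2) : Fin 2 × Fin 2 → ℂ :=
  (((1 : Matrix (Fin 2) (Fin 2) ℂ) ⊗ₖ (PX ^ (i : ℕ) * PZ ^ (j : ℕ)))).mulVec bell00

def braket2 {n : Type*} [Fintype n] (φ : n → ℂ) (M : Matrix n n ℂ) (ψ : n → ℂ) : ℂ :=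
  star φ ⬝ᵥ M.mulVec ψ

def IsDensity {n : Type*} [Fintype n] (ρ : Matrix n n ℂ) : Prop :=
  ρ.PosSemidef ∧ ρ.trace = 1

/-- The Bell-diagonal twirl B(ρ). -/
def twirl (ρ : Matrix (Fin 2 × Fin 2) (Fin 2 × Fin 2) ℂ) :
    Matrix (Fin 2 × Fin 2) (Fin 2 × Fin 2) ℂ :=
  (1 / 4 : ℂ) • (ρ + (PX ⊗ₖ PX) * ρ * (PX ⊗ₖ PX)ᴴ + (PY ⊗ₖ PY) * ρ * (PY ⊗ₖ PY)ᴴ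
    + (PZ ⊗ₖ PZ) * ρ * (PZ ⊗ₖ PZ)ᴴ)

def bproj (i j : Fin 2) : Matrix (Fin 2 × Fin 2) (Fin 2 × Fin 2) ℂ :=
  vecMulVec (bell i j) (star (bell i j))

/-- Partial inner product ⟨ψ|_{CA} M |ψ⟩_{CA} of a vector ψ on registers C,A with an
operator M on registers C,A,B, giving a matrix on register B. -/
def pbk (ψ : Fin 2 × Fin 2 → ℂ)
    (M : Matrix (Fin 2 × (Fin 2 × Fin 2)) (Fin 2 × (Fin 2 × Fin 2)) ℂ) :
    Matrix (Fin 2) (Fin 2) ℂ :=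
  fun b b' => ∑ c, ∑ a, ∑ c', ∑ a',
    star (ψ (c, a)) * M (c, (a, b)) (c', (a', b')) * ψ (c', a')

/-- The standard teleportation channel with resource state ρ applied to σ:
Λ^tel_ρ(σ) = ∑_{ij} (Z^j X^i) ⟨Ψ_ij|_{CA} (σ_C ⊗ ρ_{AB}) |Ψ_ij⟩_{CA} (Z^j X^i)†. -/
def telChan (ρ : Matrix (Fin 2 × Fin 2) (Fin 2 × Fin 2) ℂ) (σ : Matrix (Fin 2) (Fin 2) ℂ) :
    Matrix (Fin 2) (Fin 2) ℂ :=
  ∑ i : Fin 2, ∑ j : Fin 2,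
    (PZ ^ (j : ℕ) * PX ^ (i : ℕ)) * pbk (bell i j) (σ ⊗ₖ ρ) * (PZ ^ (j : ℕ) * PX ^ (i : ℕ))ᴴ

end

lemma mul_mul_mul_conjTranspose {n R : Type*} [Fintype n] [Semiring R] [StarRing R]
    (A B M : Matrix n n R) : A * (B * M * Bᴴ) * Aᴴ = (A * B) * M * (A * B)ᴴ := by
  simp only [conjTranspose_mul, Matrix.mul_assoc]

lemma smul_mul_mul_conjTranspose {n R : Type*} [Fintype n] [CommSemiring R] [StarRing R]
    {c : R} (hc : star c * c = 1) (A M : Matrix n n R) :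
    (c • A) * M * (c • A)ᴴ = A * M * Aᴴ := by
  rw [conjTranspose_smul, smul_mul, Matrix.mul_smul, smul_mul, smul_smul, hc, one_smul]

lemma PX_conjTranspose : PXᴴ = PX := by
  ext a b; fin_cases a <;> fin_cases b <;> simp [PX]

lemma PZ_conjTranspose : PZᴴ = PZ := by
  ext a b; fin_cases a <;> fin_cases b <;> simp [PZ]

lemma PX_mul_PX : PX * PX = 1 := by
  ext a b; fin_cases a <;> fin_cases b <;> simp [PX, one_apply]

lemma PZ_mul_PZ : PZ * PZ = 1 := by
  ext a b; fin_cases a <;> fin_cases b <;> simp [PZ, one_apply]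

lemma PZ_mul_PX : PZ * PX = -(PX * PZ) := by
  ext a b; fin_cases a <;> fin_cases b <;> simp [PX, PZ]

lemma PY_eq : PY = Complex.I • (PX * PZ) := by
  ext a b; fin_cases a <;> fin_cases b <;> simp [PX, PY, PZ]

lemma PX_mul_PX_pow (i : Fin 2) : PX * PX ^ (i : ℕ) = PX ^ ((i + 1 : Fin 2) : ℕ) := by
  fin_cases i <;> simp [PX_mul_PX]

lemma PZ_mul_PX_pow_mul_PZ_pow (i j : Fin 2) :
    PZ * (PX ^ (i : ℕ) * PZ ^ (j : ℕ))
      = (-1 : ℂ) ^ (i : ℕ) • (PX ^ (i : ℕ) * PZ ^ ((j + 1 : Fin 2) : ℕ)) := by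
  rw [← Matrix.mul_assoc]
  fin_cases i <;> fin_cases j <;> simp [PZ_mul_PZ, PZ_mul_PX, Matrix.mul_assoc]

lemma PZ_pow_mul_PX_pow_mul_PX (i j : Fin 2) :
    PZ ^ (j : ℕ) * PX ^ (i : ℕ) * PX = PZ ^ (j : ℕ) * PX ^ ((i + 1 : Fin 2) : ℕ) := by
  fin_cases i <;> simp [PX_mul_PX, Matrix.mul_assoc]

lemma PZ_pow_mul_PX_pow_mul_PZ (i j : Fin 2) :
    PZ ^ (j : ℕ) * PX ^ (i : ℕ) * PZ
      = (-1 : ℂ) ^ (i : ℕ) • (PZ ^ ((j + 1 : Fin 2) : ℕ) * PX ^ (i : ℕ)) := by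
  fin_cases i <;> fin_cases j <;> simp [PZ_mul_PZ, PZ_mul_PX, Matrix.mul_assoc]

lemma one_kronecker_mulVec_bell (A : Matrix (Fin 2) (Fin 2) ℂ) (i j : Fin 2) :
    ((1 : Matrix (Fin 2) (Fin 2) ℂ) ⊗ₖ A) *ᵥ bell i j
      = (1 ⊗ₖ (A * (PX ^ (i : ℕ) * PZ ^ (j : ℕ)))) *ᵥ bell00 := by
  rw [bell, mulVec_mulVec, ← mul_kronecker_mul, Matrix.one_mul]

lemma one_kronecker_PX_mulVec_bell (i j : Fin 2) :
    ((1 : Matrix (Fin 2) (Fin 2) ℂ) ⊗ₖ PX) *ᵥ bell i j = bell (i + 1) j := by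
  rw [one_kronecker_mulVec_bell, ← Matrix.mul_assoc, PX_mul_PX_pow, bell]

lemma one_kronecker_PZ_mulVec_bell (i j : Fin 2) :
    ((1 : Matrix (Fin 2) (Fin 2) ℂ) ⊗ₖ PZ) *ᵥ bell i j
      = (-1 : ℂ) ^ (i : ℕ) • bell i (j + 1) := by
  rw [one_kronecker_mulVec_bell, PZ_mul_PX_pow_mul_PZ_pow, kronecker_smul, smul_mulVec, bell]

lemma pbk_add_right (ψ : Fin 2 × Fin 2 → ℂ)
    (M N : Matrix (Fin 2 × (Fin 2 × Fin 2)) (Fin 2 × (Fin 2 × Fin 2)) ℂ) :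
    pbk ψ (M + N) = pbk ψ M + pbk ψ N := by
  ext b b'
  simp only [pbk, Matrix.add_apply, mul_add, add_mul, Finset.sum_add_distrib]

lemma pbk_smul_right (c : ℂ) (ψ : Fin 2 × Fin 2 → ℂ)
    (M : Matrix (Fin 2 × (Fin 2 × Fin 2)) (Fin 2 × (Fin 2 × Fin 2)) ℂ) :
    pbk ψ (c • M) = c • pbk ψ M := by
  ext b b'
  simp only [pbk, Matrix.smul_apply, smul_eq_mul, Finset.mul_sum, mul_assoc, mul_left_comm c]

lemma pbk_smul_left {c : ℂ} (hc : star c * c = 1) (ψ : Fin 2 × Fin 2 → ℂ)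
    (M : Matrix (Fin 2 × (Fin 2 × Fin 2)) (Fin 2 × (Fin 2 × Fin 2)) ℂ) :
    pbk (c • ψ) M = pbk ψ M := by
  ext b b'
  simp only [pbk, Pi.smul_apply, smul_eq_mul, star_mul']
  refine Fintype.sum_congr _ _ fun _ => Fintype.sum_congr _ _ fun _ =>
    Fintype.sum_congr _ _ fun _ => Fintype.sum_congr _ _ fun _ => ?_
  linear_combination (star (ψ _) * M _ _ * ψ _) * hc

lemma pbk_kronecker_conj (ψ : Fin 2 × Fin 2 → ℂ) (σ U V : Matrix (Fin 2) (Fin 2) ℂ)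
    (ρ : Matrix (Fin 2 × Fin 2) (Fin 2 × Fin 2) ℂ) :
    pbk ψ (σ ⊗ₖ ((U ⊗ₖ V) * ρ * (U ⊗ₖ V)ᴴ)) = V * pbk ((1 ⊗ₖ Uᴴ) *ᵥ ψ) (σ ⊗ₖ ρ) * Vᴴ := by
  ext b b'
  simp only [pbk, mul_apply, mulVec, dotProduct, kroneckerMap_apply, conjTranspose_apply,
    one_apply, Fintype.sum_prod_type, Fin.sum_univ_two, Fin.isValue, star_add, star_mul', star_star]
  simp only [RCLike.star_def, ↓reduceIte, star_one, star_zero, zero_ne_one, one_ne_zero, one_mul,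
    zero_mul, add_zero, zero_add]
  ring

lemma telChan_add (ρ ρ' : Matrix (Fin 2 × Fin 2) (Fin 2 × Fin 2) ℂ)
    (σ : Matrix (Fin 2) (Fin 2) ℂ) :
    telChan (ρ + ρ') σ = telChan ρ σ + telChan ρ' σ := by
  simp only [telChan, kronecker_add, pbk_add_right, Matrix.mul_add, Matrix.add_mul,
    Finset.sum_add_distrib]

lemma telChan_smul (c : ℂ) (ρ : Matrix (Fin 2 × Fin 2) (Fin 2 × Fin 2) ℂ)
    (σ : Matrix (Fin 2) (Fin 2) ℂ) : telChan (c • ρ) σ = c • telChan ρ σ := by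
  simp only [telChan, kronecker_smul, pbk_smul_right, Matrix.mul_smul, Matrix.smul_mul,
    Finset.smul_sum]

lemma telChan_conj_PX_kronecker_PX (ρ : Matrix (Fin 2 × Fin 2) (Fin 2 × Fin 2) ℂ)
    (σ : Matrix (Fin 2) (Fin 2) ℂ) :
    telChan ((PX ⊗ₖ PX) * ρ * (PX ⊗ₖ PX)ᴴ) σ = telChan ρ σ :=
  Fintype.sum_equiv (Equiv.addRight 1) _ _ fun i => Fintype.sum_congr _ _ fun j => by
    rw [pbk_kronecker_conj, mul_mul_mul_conjTranspose, PZ_pow_mul_PX_pow_mul_PX, PX_conjTranspose,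
      one_kronecker_PX_mulVec_bell, Equiv.coe_addRight]

lemma telChan_conj_PZ_kronecker_PZ (ρ : Matrix (Fin 2 × Fin 2) (Fin 2 × Fin 2) ℂ)
    (σ : Matrix (Fin 2) (Fin 2) ℂ) :
    telChan ((PZ ⊗ₖ PZ) * ρ * (PZ ⊗ₖ PZ)ᴴ) σ = telChan ρ σ :=
  Fintype.sum_congr _ _ fun i => Fintype.sum_equiv (Equiv.addRight 1) _ _ fun j => by
    have hsign : star ((-1 : ℂ) ^ (i : ℕ)) * (-1) ^ (i : ℕ) = 1 := by
      rw [star_pow, star_neg, star_one, ← mul_pow, neg_one_mul, neg_neg, one_pow]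
    rw [pbk_kronecker_conj, mul_mul_mul_conjTranspose, PZ_pow_mul_PX_pow_mul_PZ,
      smul_mul_mul_conjTranspose hsign, PZ_conjTranspose, one_kronecker_PZ_mulVec_bell,
      pbk_smul_left hsign, Equiv.coe_addRight]

lemma PY_kronecker_PY_conj (ρ : Matrix (Fin 2 × Fin 2) (Fin 2 × Fin 2) ℂ) :
    (PY ⊗ₖ PY) * ρ * (PY ⊗ₖ PY)ᴴ
      = (PX ⊗ₖ PX) * ((PZ ⊗ₖ PZ) * ρ * (PZ ⊗ₖ PZ)ᴴ) * (PX ⊗ₖ PX)ᴴ := by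
  rw [mul_mul_mul_conjTranspose, ← mul_kronecker_mul, PY_eq, smul_kronecker, kronecker_smul,
    smul_smul, smul_mul_mul_conjTranspose]
  simp

theorem telChan_twirl_invariant_general (σ : Matrix (Fin 2) (Fin 2) ℂ)
    (ρ : Matrix (Fin 2 × Fin 2) (Fin 2 × Fin 2) ℂ) :
    telChan ρ σ = telChan (twirl ρ) σ := by
  rw [twirl, telChan_smul, telChan_add, telChan_add, telChan_add, PY_kronecker_PY_conj]
  simp only [telChan_conj_PX_kronecker_PX, telChan_conj_PZ_kronecker_PZ]
  module

/-- The standard teleportation channel is invariant under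
Bell-diagonal twirling of the resource state. -/
theorem telChan_twirl_invariant (σ : Matrix (Fin 2) (Fin 2) ℂ) (hσ : IsDensity σ)
    (ρ : Matrix (Fin 2 × Fin 2) (Fin 2 × Fin 2) ℂ) (hρ : IsDensity ρ) :
    telChan ρ σ = telChan (twirl ρ) σ :=
  telChan_twirl_invariant_general σ ρ
end

section
/- The standard teleportation channel with resource state ρ is a Pauli channel: Λ^tel_ρ(σ) = ∑_{i,j∈{0,1}} λ_ij (X^i Z^j) σ (X^i Z^j)†, where λ_ij = ⟨Ψ_ij| ρ |Ψ_ij⟩ are the Bell-diagonal elements of ρ. -/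
open Matrix Kronecker BigOperators ComplexOrder

noncomputable section

lemma bell_apply (i j : Fin 2) (c a : Fin 2) :
    bell i j (c, a) = ((1 / Real.sqrt 2 : ℝ) : ℂ) * (PX ^ (i : ℕ) * PZ ^ (j : ℕ)) a c := by
  fin_cases c <;>
  simp [bell, bell00, Matrix.mulVec, dotProduct, Fintype.sum_prod_type,
    Fin.sum_univ_two, Matrix.kroneckerMap_apply, Matrix.one_apply] <;> ring

private lemma hts' : (starRingEnd ℂ) ((1 / Real.sqrt 2 : ℝ) : ℂ) = ((1 / Real.sqrt 2 : ℝ) : ℂ) :=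
  Complex.conj_ofReal _

lemma pbk_bell_ent (i j : Fin 2) (σ : Matrix (Fin 2) (Fin 2) ℂ)
    (ρ : Matrix (Fin 2 × Fin 2) (Fin 2 × Fin 2) ℂ) (b b' : Fin 2) :
    pbk (bell i j) (σ ⊗ₖ ρ) b b' = ∑ c, ∑ a, ∑ c', ∑ a',
      ((1 / Real.sqrt 2 : ℝ) : ℂ) * ((1 / Real.sqrt 2 : ℝ) : ℂ) *
      ((starRingEnd ℂ) ((PX ^ (i : ℕ) * PZ ^ (j : ℕ)) a c) * σ c c' * ρ (a, b) (a', b')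
        * (PX ^ (i : ℕ) * PZ ^ (j : ℕ)) a' c') := by
  simp only [pbk, bell_apply, Matrix.kroneckerMap_apply, star_mul', Complex.conj_ofReal, Pi.star_apply]
  refine Finset.sum_congr rfl fun c _ => Finset.sum_congr rfl fun a _ =>
    Finset.sum_congr rfl fun c' _ => Finset.sum_congr rfl fun a' _ => ?_
  simp only [RCLike.star_def, Complex.conj_ofReal]
  ring

private def t : ℂ := ((1 / Real.sqrt 2 : ℝ) : ℂ)

private lemma c0 : (starRingEnd ℂ) 0 = 0 := by simp
private lemma c1 : (starRingEnd ℂ) 1 = 1 := by simp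
private lemma cm1 : (starRingEnd ℂ) (-1) = -1 := by simp
private lemma sc0 : star (0 : ℂ) = 0 := star_zero _
private lemma sc1 : star (1 : ℂ) = 1 := star_one _
private lemma scm1 : star (-1 : ℂ) = -1 := by simp

lemma pbk00 (σ : Matrix (Fin 2) (Fin 2) ℂ) (ρ : Matrix (Fin 2 × Fin 2) (Fin 2 × Fin 2) ℂ)
    (b b' : Fin 2) :
    pbk (bell 0 0) (σ ⊗ₖ ρ) b b' = t * t *
      (σ 0 0 * ρ (0, b) (0, b') + σ 0 1 * ρ (0, b) (1, b')
        + σ 1 0 * ρ (1, b) (0, b') + σ 1 1 * ρ (1, b) (1, b')) := by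
  simp only [pbk_bell_ent, Fin.sum_univ_two, Fin.isValue, Fin.val_zero, pow_zero,
    Matrix.one_mul, Matrix.mul_one, Matrix.one_apply, t]
  norm_num
  ring

lemma pbk10 (σ : Matrix (Fin 2) (Fin 2) ℂ) (ρ : Matrix (Fin 2 × Fin 2) (Fin 2 × Fin 2) ℂ)
    (b b' : Fin 2) :
    pbk (bell 1 0) (σ ⊗ₖ ρ) b b' = t * t *
      (σ 0 0 * ρ (1, b) (1, b') + σ 0 1 * ρ (1, b) (0, b')
        + σ 1 0 * ρ (0, b) (1, b') + σ 1 1 * ρ (0, b) (0, b')) := by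
  simp only [pbk_bell_ent, Fin.sum_univ_two, Fin.isValue, Fin.val_zero, Fin.val_one, pow_zero,
    pow_one, Matrix.one_mul, Matrix.mul_one, PX, Matrix.of_apply, Complex.conj_ofReal, Matrix.cons_val', Matrix.cons_val_zero,
    Matrix.cons_val_one, Matrix.head_cons, Matrix.empty_val', Matrix.cons_val_fin_one,
    Matrix.head_fin_const, c0, c1, cm1, t]
  ring

lemma pbk01 (σ : Matrix (Fin 2) (Fin 2) ℂ) (ρ : Matrix (Fin 2 × Fin 2) (Fin 2 × Fin 2) ℂ)
    (b b' : Fin 2) :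
    pbk (bell 0 1) (σ ⊗ₖ ρ) b b' = t * t *
      (σ 0 0 * ρ (0, b) (0, b') - σ 0 1 * ρ (0, b) (1, b')
        - σ 1 0 * ρ (1, b) (0, b') + σ 1 1 * ρ (1, b) (1, b')) := by
  simp only [pbk_bell_ent, Fin.sum_univ_two, Fin.isValue, Fin.val_zero, Fin.val_one, pow_zero,
    pow_one, Matrix.one_mul, Matrix.mul_one, PZ, Matrix.of_apply, Complex.conj_ofReal, Matrix.cons_val', Matrix.cons_val_zero,
    Matrix.cons_val_one, Matrix.head_cons, Matrix.empty_val', Matrix.cons_val_fin_one,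
    Matrix.head_fin_const, c0, c1, cm1, t]
  ring

lemma pbk11 (σ : Matrix (Fin 2) (Fin 2) ℂ) (ρ : Matrix (Fin 2 × Fin 2) (Fin 2 × Fin 2) ℂ)
    (b b' : Fin 2) :
    pbk (bell 1 1) (σ ⊗ₖ ρ) b b' = t * t *
      (σ 0 0 * ρ (1, b) (1, b') - σ 0 1 * ρ (1, b) (0, b')
        - σ 1 0 * ρ (0, b) (1, b') + σ 1 1 * ρ (0, b) (0, b')) := by
  simp only [pbk_bell_ent, Fin.sum_univ_two, Fin.isValue, Fin.val_one, pow_one, PX, PZ,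
    Matrix.mul_apply, Matrix.of_apply, Complex.conj_ofReal, Matrix.cons_val', Matrix.cons_val_zero, Matrix.cons_val_one,
    Matrix.head_cons, Matrix.empty_val', Matrix.cons_val_fin_one, Matrix.head_fin_const,
    c0, c1, cm1, mul_one, mul_zero, one_mul, zero_mul, add_zero, zero_add, neg_mul, mul_neg,
    neg_neg, neg_zero, t]
  ring

lemma lam_ent (i j : Fin 2) (ρ : Matrix (Fin 2 × Fin 2) (Fin 2 × Fin 2) ℂ) :
    braket2 (bell i j) ρ (bell i j) = ∑ c, ∑ a, ∑ c', ∑ a',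
      ((1 / Real.sqrt 2 : ℝ) : ℂ) * ((1 / Real.sqrt 2 : ℝ) : ℂ) *
      ((starRingEnd ℂ) ((PX ^ (i : ℕ) * PZ ^ (j : ℕ)) a c) * ρ (c, a) (c', a')
        * (PX ^ (i : ℕ) * PZ ^ (j : ℕ)) a' c') := by
  simp only [braket2, dotProduct, Matrix.mulVec, Fintype.sum_prod_type, Pi.star_apply,
    Finset.mul_sum, Finset.sum_mul]
  refine Finset.sum_congr rfl fun c _ => Finset.sum_congr rfl fun a _ =>
    Finset.sum_congr rfl fun c' _ => Finset.sum_congr rfl fun a' _ => ?_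
  simp only [bell_apply, star_mul', Complex.conj_ofReal, RCLike.star_def]
  ring

lemma lam00 (ρ : Matrix (Fin 2 × Fin 2) (Fin 2 × Fin 2) ℂ) :
    braket2 (bell 0 0) ρ (bell 0 0) = t * t *
      (ρ (0, 0) (0, 0) + ρ (0, 0) (1, 1) + ρ (1, 1) (0, 0) + ρ (1, 1) (1, 1)) := by
  simp only [lam_ent, Fin.sum_univ_two, Fin.isValue, Fin.val_zero, pow_zero,
    Matrix.one_mul, Matrix.mul_one, Matrix.one_apply, t]
  norm_num
  ring

lemma lam10 (ρ : Matrix (Fin 2 × Fin 2) (Fin 2 × Fin 2) ℂ) :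
    braket2 (bell 1 0) ρ (bell 1 0) = t * t *
      (ρ (0, 1) (0, 1) + ρ (0, 1) (1, 0) + ρ (1, 0) (0, 1) + ρ (1, 0) (1, 0)) := by
  simp only [lam_ent, Fin.sum_univ_two, Fin.isValue, Fin.val_zero, Fin.val_one, pow_zero,
    pow_one, Matrix.one_mul, Matrix.mul_one, PX, Matrix.of_apply, Complex.conj_ofReal, Matrix.cons_val', Matrix.cons_val_zero,
    Matrix.cons_val_one, Matrix.head_cons, Matrix.empty_val', Matrix.cons_val_fin_one,
    Matrix.head_fin_const, c0, c1, cm1, t]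
  ring

lemma lam01 (ρ : Matrix (Fin 2 × Fin 2) (Fin 2 × Fin 2) ℂ) :
    braket2 (bell 0 1) ρ (bell 0 1) = t * t *
      (ρ (0, 0) (0, 0) - ρ (0, 0) (1, 1) - ρ (1, 1) (0, 0) + ρ (1, 1) (1, 1)) := by
  simp only [lam_ent, Fin.sum_univ_two, Fin.isValue, Fin.val_zero, Fin.val_one, pow_zero,
    pow_one, Matrix.one_mul, Matrix.mul_one, PZ, Matrix.of_apply, Complex.conj_ofReal, Matrix.cons_val', Matrix.cons_val_zero,
    Matrix.cons_val_one, Matrix.head_cons, Matrix.empty_val', Matrix.cons_val_fin_one,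
    Matrix.head_fin_const, c0, c1, cm1, t]
  ring

lemma lam11 (ρ : Matrix (Fin 2 × Fin 2) (Fin 2 × Fin 2) ℂ) :
    braket2 (bell 1 1) ρ (bell 1 1) = t * t *
      (ρ (0, 1) (0, 1) - ρ (0, 1) (1, 0) - ρ (1, 0) (0, 1) + ρ (1, 0) (1, 0)) := by
  simp only [lam_ent, Fin.sum_univ_two, Fin.isValue, Fin.val_one, pow_one, PX, PZ,
    Matrix.mul_apply, Matrix.of_apply, Complex.conj_ofReal, Matrix.cons_val', Matrix.cons_val_zero, Matrix.cons_val_one,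
    Matrix.head_cons, Matrix.empty_val', Matrix.cons_val_fin_one, Matrix.head_fin_const,
    c0, c1, cm1, mul_one, mul_zero, one_mul, zero_mul, add_zero, zero_add, neg_mul, mul_neg,
    neg_neg, neg_zero, t]
  ring

set_option maxHeartbeats 2000000 in
/-- The standard teleportation channel with resource state ρ is the Pauli
channel with coefficients the Bell-diagonal elements λ_ij = ⟨Ψ_ij|ρ|Ψ_ij⟩ of ρ. -/
theorem telChan_is_pauli_channel (σ : Matrix (Fin 2) (Fin 2) ℂ) (hσ : IsDensity σ)
    (ρ : Matrix (Fin 2 × Fin 2) (Fin 2 × Fin 2) ℂ) (hρ : IsDensity ρ) :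
    telChan ρ σ = ∑ i : Fin 2, ∑ j : Fin 2,
      braket2 (bell i j) ρ (bell i j) •
        ((PX ^ (i : ℕ) * PZ ^ (j : ℕ)) * σ * (PX ^ (i : ℕ) * PZ ^ (j : ℕ))ᴴ) := by
  ext b b'
  fin_cases b <;> fin_cases b' <;>
  · simp only [telChan, Fin.sum_univ_two, Fin.isValue, Fin.val_zero, Fin.val_one, pow_zero,
      pow_one, Matrix.one_mul, Matrix.mul_one, Matrix.one_fin_two, Fin.mk_zero, Fin.mk_one,
      Matrix.add_apply, Matrix.mul_apply, Matrix.smul_apply, Matrix.conjTranspose_apply,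
      lam00, lam10, lam01, lam11, pbk00, pbk10, pbk01, pbk11, PX, PZ,
      Matrix.of_apply, Complex.conj_ofReal, Matrix.cons_val', Matrix.cons_val_zero, Matrix.cons_val_one, Matrix.head_cons,
      Matrix.empty_val', Matrix.cons_val_fin_one, Matrix.head_fin_const,
      star_add, star_mul', sc0, sc1, scm1, c0, c1, cm1, smul_eq_mul, mul_one, mul_zero,
      one_mul, zero_mul, add_zero, zero_add, neg_neg, mul_neg, neg_mul, star_neg]
    ring
end
end

section
/- Swapping two Werner states with fidelities F₁ and F₂ yields a Werner state with fidelity F' = F₁F₂ + (1-F₁)(1-F₂)/3. Equivalently, the Werner parameters w = (4F-1)/3 multiply: w' = w₁w₂. -/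
open BigOperators

noncomputable section

/-- A probability vector: nonnegative entries summing to one. -/
def IsProbVec {n : Type*} [Fintype n] (v : n → ℝ) : Prop :=
  (∀ a, 0 ≤ v a) ∧ ∑ a, v a = 1

/-- The Bell-diagonal entanglement-swap map on Bell-diagonal coefficient vectors,
indexed by the Klein four-group Fin 2 × Fin 2 (0 ↔ (0,0), 1 ↔ (0,1), 2 ↔ (1,0), 3 ↔ (1,1)):
λ'_a = ∑_{b⊕c=a} λ_b μ_c. -/
def swapBD (l m : Fin 2 × Fin 2 → ℝ) : Fin 2 × Fin 2 → ℝ :=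
  fun a => ∑ b : Fin 2 × Fin 2, l b * m (a.1 + b.1, a.2 + b.2)

/-- Bell-diagonal coefficient vector of the Werner state with fidelity F:
(F, (1-F)/3, (1-F)/3, (1-F)/3). -/
def wernerVec (F : ℝ) : Fin 2 × Fin 2 → ℝ :=
  fun a => if a = (0, 0) then F else (1 - F) / 3

/-- Sequential swapping of a list of Bell-diagonal states
(the empty chain corresponds to the perfect state (1,0,0,0)). -/
def seqSwap : List (Fin 2 × Fin 2 → ℝ) → (Fin 2 × Fin 2 → ℝ)
  | [] => fun a => if a = (0, 0) then 1 else 0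
  | v :: vs => swapBD v (seqSwap vs)

/-- Swapping two Werner states with fidelities F₁, F₂ yields a Werner state
with fidelity F' = F₁F₂ + (1−F₁)(1−F₂)/3; equivalently the Werner parameters multiply. -/
theorem swap_werner (F₁ F₂ : ℝ) :
    swapBD (wernerVec F₁) (wernerVec F₂) = wernerVec (F₁ * F₂ + (1 - F₁) * (1 - F₂) / 3) ∧
    (4 * (F₁ * F₂ + (1 - F₁) * (1 - F₂) / 3) - 1) / 3 = ((4 * F₁ - 1) / 3) * ((4 * F₂ - 1) / 3) := by
  constructor
  · funext a
    fin_cases a <;>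
      simp [swapBD, wernerVec, Fintype.sum_prod_type, Fin.sum_univ_two, Prod.ext_iff, show (1:Fin 2) + 0 = 1 from rfl, show (1:Fin 2) + 1 = 0 from rfl, show (0:Fin 2) + 1 = 1 from rfl] <;> ring
  · ring
end
end

section
/- For the N=2 swap of Bell-diagonal states with fidelities F₁ and F₂, the lower bound F' ≥ F₁F₂ and upper bound F' ≤ F₁F₂ + (1−F₁)(1−F₂) are both tight: there exist Bell-diagonal states achieving each bound (e.g., (F₁,1−F₁,0,0) and (F₂,0,1−F₂,0) achieve the lower bound; (F₁,1−F₁,0,0) and (F₂,1−F₂,0,0) achieve the upper bound). -/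
open BigOperators

noncomputable section

/-- For the N = 2 swap of Bell-diagonal states with fidelities F₁, F₂,
both the lower bound F₁F₂ and the upper bound F₁F₂ + (1−F₁)(1−F₂) on the output fidelity
are achieved by suitable Bell-diagonal states. -/
theorem swap_bounds_tight (F₁ F₂ : ℝ) (hF₁ : 0 ≤ F₁ ∧ F₁ ≤ 1) (hF₂ : 0 ≤ F₂ ∧ F₂ ≤ 1) :
    (∃ l m : Fin 2 × Fin 2 → ℝ, IsProbVec l ∧ IsProbVec m ∧
      l (0, 0) = F₁ ∧ m (0, 0) = F₂ ∧ swapBD l m (0, 0) = F₁ * F₂) ∧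
    (∃ l m : Fin 2 × Fin 2 → ℝ, IsProbVec l ∧ IsProbVec m ∧
      l (0, 0) = F₁ ∧ m (0, 0) = F₂ ∧
      swapBD l m (0, 0) = F₁ * F₂ + (1 - F₁) * (1 - F₂)) := by
  constructor
  · refine ⟨fun a => if a = (0,0) then F₁ else if a = (0,1) then 1 - F₁ else 0,
          fun a => if a = (0,0) then F₂ else if a = (1,0) then 1 - F₂ else 0,
          ⟨fun a => ?_, ?_⟩, ⟨fun a => ?_, ?_⟩, by norm_num, by norm_num, ?_⟩
    · dsimp only; split_ifs <;> simp_all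
    · simp [Fintype.sum_prod_type, Fin.sum_univ_two]
    · dsimp only; split_ifs <;> simp_all
    · simp [Fintype.sum_prod_type, Fin.sum_univ_two]
    · simp [swapBD, Fintype.sum_prod_type, Fin.sum_univ_two]
  · refine ⟨fun a => if a = (0,0) then F₁ else if a = (0,1) then 1 - F₁ else 0,
          fun a => if a = (0,0) then F₂ else if a = (0,1) then 1 - F₂ else 0,
          ⟨fun a => ?_, ?_⟩, ⟨fun a => ?_, ?_⟩, by norm_num, by norm_num, ?_⟩
    · dsimp only; split_ifs <;> simp_all
    · simp [Fintype.sum_prod_type, Fin.sum_univ_two]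
    · dsimp only; split_ifs <;> simp_all
    · simp [Fintype.sum_prod_type, Fin.sum_univ_two]
    · simp [swapBD, Fintype.sum_prod_type, Fin.sum_univ_two]
end
end
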